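/- Let n ≥ 2, let u ∈ S_n be a permutation with u_1 = n, and let σ, τ ∈ {1,−1}^n be sign vectors that differ only in the first coordinate, with σ_1 = 1 and τ_1 = −1. Let w be whichever of the signed permutations σu = (σ_1 u_1,...,σ_n u_n) and τu has an even number of negative entries. Then |D_B(σu)| = |D_B(τu)| = |D_D(w)|. -/
import Mathlib


/-- `|D_B(w)|` for a signed permutation `w` (encoded as the sequence `w_1,…,w_n` of its
values in `±{1,…,n}`): the number of indices `i` with `w_{i−1} > w_i`, with the convention
`w_0 = 0`. -/
noncomputable def DBcard {n : ℕ} (w : Fin n → ℤ) : ℕ :=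
  Nat.card {i : Fin n // ((i : ℕ) = 0 ∧ w i < 0) ∨
    (∃ j : Fin n, (j : ℕ) + 1 = (i : ℕ) ∧ w i < w j)}

/-- `|D_D(w)|` for a signed permutation `w` with an even number of negative entries:
`1 ∈ D_D(w)` iff `−w_1 > w_2`, and for `i > 1`, `i ∈ D_D(w)` iff `w_{i−1} > w_i`. -/
noncomputable def DDcard {n : ℕ} (w : Fin n → ℤ) : ℕ :=
  Nat.card {i : Fin n // ((i : ℕ) = 0 ∧ ∃ j : Fin n, (j : ℕ) = 1 ∧ w j < -(w i)) ∨
    (∃ j : Fin n, (j : ℕ) + 1 = (i : ℕ) ∧ w i < w j)}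

set_option maxHeartbeats 1000000

/-- Let `u ∈ S_n` with `u_1 = n` (values encoded as `(u i) + 1 ∈ {1,…,n}`), and let
`σ, τ ∈ {1,−1}ⁿ` differ only in the first coordinate, with `σ_1 = 1`, `τ_1 = −1`.  Let `w`
be whichever of the signed permutations `σu`, `τu` has an even number of negative entries.
Then `|D_B(σu)| = |D_B(τu)| = |D_D(w)|`. -/
theorem DB_eq_DD (n : ℕ) (hn : 2 ≤ n) (u : Equiv.Perm (Fin n))
    (hu : (u ⟨0, by omega⟩ : ℕ) = n - 1)
    (σ τ : Fin n → ℤ)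
    (hσ : ∀ i, σ i = 1 ∨ σ i = -1) (hτ : ∀ i, τ i = 1 ∨ τ i = -1)
    (hσ0 : σ ⟨0, by omega⟩ = 1) (hτ0 : τ ⟨0, by omega⟩ = -1)
    (hagree : ∀ i : Fin n, (i : ℕ) ≠ 0 → σ i = τ i)
    (w : Fin n → ℤ)
    (hw : w = (fun i => σ i * ((u i : ℕ) + 1)) ∨ w = (fun i => τ i * ((u i : ℕ) + 1)))
    (hweven : Even (Nat.card {i : Fin n // w i < 0})) :
    DBcard (fun i => σ i * ((u i : ℕ) + 1)) = DBcard (fun i => τ i * ((u i : ℕ) + 1)) ∧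
      DBcard (fun i => τ i * ((u i : ℕ) + 1)) = DDcard w := by
  classical
  have h0 : 0 < n := by omega
  have h1 : 1 < n := by omega
  set f : Fin n → ℤ := fun i => σ i * ((u i : ℕ) + 1) with hf
  set g : Fin n → ℤ := fun i => τ i * ((u i : ℕ) + 1) with hg
  have vI0 : ((⟨0, h0⟩ : Fin n) : ℕ) = 0 := rfl
  have vI1 : ((⟨1, h1⟩ : Fin n) : ℕ) = 1 := rfl
  have hnpos : (0 : ℤ) < (n : ℤ) := by exact_mod_cast h0
  -- basic values
  have hu0 : ((u ⟨0, h0⟩ : ℕ) : ℤ) + 1 = (n : ℤ) := by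
    have h : (u ⟨0, h0⟩ : ℕ) = n - 1 := hu
    rw [h]; push_cast; omega
  have hfI0 : f ⟨0, h0⟩ = (n : ℤ) := by
    have h : σ ⟨0, h0⟩ = 1 := hσ0
    simp [hf, h, hu0]
  have hgI0 : g ⟨0, h0⟩ = -(n : ℤ) := by
    have h : τ ⟨0, h0⟩ = -1 := hτ0
    simp [hg, h, hu0]
  have hbound : ∀ i : Fin n, (i : ℕ) ≠ 0 → ((u i : ℕ) : ℤ) + 1 < (n : ℤ) := by
    intro i hi
    have h1' : (u i : ℕ) < n := (u i).2
    have h2 : (u i : ℕ) ≠ n - 1 := by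
      intro h
      have he : u i = u ⟨0, h0⟩ := Fin.ext (by rw [h, hu])
      have := u.injective he
      apply hi
      rw [this]
    have : (u i : ℕ) < n - 1 := by omega
    push_cast
    omega
  have hfb : ∀ i : Fin n, (i : ℕ) ≠ 0 → -(n : ℤ) < f i ∧ f i < (n : ℤ) := by
    intro i hi
    have hb := hbound i hi
    have h2 : (0 : ℤ) < ((u i : ℕ) : ℤ) + 1 := by positivity
    rcases hσ i with h | h <;> simp only [hf, h] <;> constructor <;> nlinarith
  have hfg : ∀ i : Fin n, (i : ℕ) ≠ 0 → f i = g i := by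
    intro i hi
    simp only [hf, hg, hagree i hi]
  have hgb : ∀ i : Fin n, (i : ℕ) ≠ 0 → -(n : ℤ) < g i ∧ g i < (n : ℤ) := by
    intro i hi
    rw [← hfg i hi]; exact hfb i hi
  have hI1ne : ((⟨1, h1⟩ : Fin n) : ℕ) ≠ 0 := by omega
  have hjeq : ∀ (j : Fin n) (k : ℕ) (hk : k < n), (j : ℕ) = k → j = ⟨k, hk⟩ := by
    intro j k hk h; exact Fin.ext h
  -- Claim 1 : DBcard f = DBcard g
  have claim1 : DBcard f = DBcard g := by
    apply Nat.card_congr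
    apply Equiv.subtypeEquiv (Equiv.swap (⟨0, h0⟩ : Fin n) ⟨1, h1⟩)
    intro i
    rcases eq_or_ne i ⟨0, h0⟩ with rfl | hi0
    · rw [Equiv.swap_apply_left]
      constructor
      · rintro (⟨_, hlt⟩ | ⟨j, hj, _⟩)
        · rw [hfI0] at hlt; omega
        · rw [vI0] at hj; omega
      · rintro (⟨h, _⟩ | ⟨j, hj, hlt⟩)
        · rw [vI1] at h; omega
        · exfalso
          rw [vI1] at hj
          have hj0 : j = ⟨0, h0⟩ := hjeq j 0 h0 (by omega)
          rw [hj0, hgI0] at hlt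
          have := (hgb ⟨1, h1⟩ hI1ne).1
          omega
    · rcases eq_or_ne i ⟨1, h1⟩ with rfl | hi1
      · rw [Equiv.swap_apply_right]
        constructor
        · intro _
          left
          refine ⟨vI0, ?_⟩
          rw [hgI0]
          omega
        · intro _
          right
          refine ⟨⟨0, h0⟩, by rw [vI0, vI1], ?_⟩
          rw [hfI0]
          exact (hfb ⟨1, h1⟩ hI1ne).2
      · rw [Equiv.swap_apply_of_ne_of_ne hi0 hi1]
        have hiv : (i : ℕ) ≠ 0 := fun h => hi0 (hjeq i 0 h0 h)
        have hiv1 : (i : ℕ) ≠ 1 := fun h => hi1 (hjeq i 1 h1 h)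
        constructor
        · rintro (⟨h, _⟩ | ⟨j, hj, hlt⟩)
          · exact absurd h hiv
          · right
            have hjne : (j : ℕ) ≠ 0 := by omega
            exact ⟨j, hj, by rw [← hfg i hiv, ← hfg j hjne]; exact hlt⟩
        · rintro (⟨h, _⟩ | ⟨j, hj, hlt⟩)
          · exact absurd h hiv
          · right
            have hjne : (j : ℕ) ≠ 0 := by omega
            exact ⟨j, hj, by rw [hfg i hiv, hfg j hjne]; exact hlt⟩
  -- Claim 2 : DDcard f = DBcard f
  have claim2 : DDcard f = DBcard f := by
    apply Nat.card_congr
    apply Equiv.subtypeEquivRight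
    intro i
    rcases eq_or_ne i ⟨0, h0⟩ with rfl | hi0
    · constructor
      · rintro (⟨_, j, hj, hlt⟩ | ⟨j, hj, _⟩)
        · exfalso
          have hj1 : j = ⟨1, h1⟩ := hjeq j 1 h1 hj
          rw [hj1, hfI0] at hlt
          have := (hfb ⟨1, h1⟩ hI1ne).1
          omega
        · rw [vI0] at hj; omega
      · rintro (⟨_, hlt⟩ | ⟨j, hj, _⟩)
        · rw [hfI0] at hlt; omega
        · rw [vI0] at hj; omega
    · have hiv : (i : ℕ) ≠ 0 := fun h => hi0 (hjeq i 0 h0 h)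
      constructor
      · rintro (⟨h, _⟩ | h)
        · exact absurd h hiv
        · exact Or.inr h
      · rintro (⟨h, _⟩ | h)
        · exact absurd h hiv
        · exact Or.inr h
  -- Claim 3 : DDcard g = DBcard g
  have claim3 : DDcard g = DBcard g := by
    apply Nat.card_congr
    apply Equiv.subtypeEquivRight
    intro i
    rcases eq_or_ne i ⟨0, h0⟩ with rfl | hi0
    · constructor
      · intro _
        left
        refine ⟨vI0, ?_⟩
        rw [hgI0]
        omega
      · intro _
        left
        refine ⟨vI0, ⟨1, h1⟩, vI1, ?_⟩
        rw [hgI0, neg_neg]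
        exact (hgb ⟨1, h1⟩ hI1ne).2
    · have hiv : (i : ℕ) ≠ 0 := fun h => hi0 (hjeq i 0 h0 h)
      constructor
      · rintro (⟨h, _⟩ | h)
        · exact absurd h hiv
        · exact Or.inr h
      · rintro (⟨h, _⟩ | h)
        · exact absurd h hiv
        · exact Or.inr h
  refine ⟨claim1, ?_⟩
  rcases hw with rfl | rfl
  · rw [claim2, claim1]
  · rw [claim3]
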